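/- arXiv:2411.15363 — 3 statements merged into one kernel-verified Lean document; each statement's English description precedes it below -/
import Mathlib

section
/- Let Λ be a greedoid over a finite alphabet Σ that possesses the interval property. Let F and F' be flats of Λ, let μ ∈ Λ be a word such that the flat [μ] is a meet of F and F', and let x ∈ Σ satisfy μx ∈ Λ. If [μx] ⊑ F' and it is not the case that [μx] ⊑ F, then x ∈ Γ(F), i.e. αx ∈ Λ for every α ∈ F. (Forking Lemma) -/
namespace PaperPG

def letters {A : Type*} (w : List A) : Set A := {x | x ∈ w}

/-- A greedoid over alphabet `A`: a nonempty simple hereditary language with exchange. -/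
structure Greedoid (A : Type*) where
  lang : Set (List A)
  lang_nonempty : lang.Nonempty
  simple : ∀ w ∈ lang, w.Nodup
  hereditary : ∀ α β : List A, α ++ β ∈ lang → α ∈ lang
  exchange : ∀ α ∈ lang, ∀ β ∈ lang, β.length < α.length →
      ∃ x ∈ letters α, β ++ [x] ∈ lang

/-- Kernel of a flat: union of the letter sets of its members. -/
def flatKernel {A : Type*} (F : Set (List A)) : Set A := {y : A | ∃ β ∈ F, y ∈ β}

namespace Greedoid

variable {A : Type*} (G : Greedoid A)

/-- `X` is feasible if it is the set of letters of a feasible word. -/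
def Feasible (X : Set A) : Prop := ∃ α ∈ G.lang, letters α = X

/-- The interval property. -/
def IntervalProperty : Prop :=
  ∀ X Y Z : Set A, G.Feasible X → G.Feasible Y → G.Feasible Z →
    X ⊆ Y → Y ⊆ Z → ∀ x : A, x ∉ Z →
      G.Feasible (X ∪ {x}) → G.Feasible (Z ∪ {x}) → G.Feasible (Y ∪ {x})

/-- A loop is a letter occurring in no feasible word. -/
def IsLoop (x : A) : Prop := ∀ α ∈ G.lang, x ∉ α

/-- A greedoid is normal if it has no loops. -/
def Normal : Prop := ∀ x : A, ¬ G.IsLoop x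

/-- Greedoid rank: maximum length of a feasible word with letters inside `X`. -/
noncomputable def rank (X : Set A) : ℕ :=
  sSup {n : ℕ | ∃ α ∈ G.lang, letters α ⊆ X ∧ α.length = n}

/-- Greedoid span. -/
def spanR (X : Set A) : Set A := {y : A | G.rank (X ∪ {y}) = G.rank X}

/-- Kernel of a set. -/
def kernel (X : Set A) : Set A :=
  {y : A | ∃ β ∈ G.lang, letters β ⊆ G.spanR X ∧ y ∈ β}

/-- Continuations of a word. -/
def cont (α : List A) : Set A := {x : A | α ++ [x] ∈ G.lang}

/-- The flat (equivalence class under equal continuations) of a word. -/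
def flatOf (α : List A) : Set (List A) := {β ∈ G.lang | G.cont β = G.cont α}

def IsFlat (F : Set (List A)) : Prop := ∃ α ∈ G.lang, F = G.flatOf α


/-- Order on flats: `[α] ⊑ [β]` iff some `αγ ∈ Λ` with `αγ ∼ β`. -/
def flatLE (F F' : Set (List A)) : Prop :=
  ∃ α ∈ F, ∃ γ : List A, α ++ γ ∈ G.lang ∧ (α ++ γ) ∈ F'

def flatLT (F F' : Set (List A)) : Prop := G.flatLE F F' ∧ F ≠ F'

/-- Covering relation on flats. -/
def flatCovBy (F F' : Set (List A)) : Prop :=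
  G.flatLT F F' ∧ ∀ E : Set (List A), G.IsFlat E → G.flatLT F E → G.flatLT E F' → False

/-- `M` is a meet of the flats `F` and `F'`. -/
def IsMeet (M F F' : Set (List A)) : Prop :=
  G.IsFlat M ∧ G.flatLE M F ∧ G.flatLE M F' ∧
    ∀ E : Set (List A), G.IsFlat E → G.flatLE E F → G.flatLE E F' → G.flatLE E M

/-- A basic word: one of maximum length. -/
def Basic (w : List A) : Prop := w ∈ G.lang ∧ ∀ v ∈ G.lang, v.length ≤ w.length

/-- Optimism: every non-loop is a continuation of some prefix of every basic word. -/
def Optimistic : Prop :=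
  ∀ y : A, ¬ G.IsLoop y → ∀ w : List A, G.Basic w →
    ∃ i ≤ w.length, y ∈ G.cont (w.take i)

/-- The greatest representation `ρ♮`. -/
noncomputable def rhoNat (X : Set A) : ℕ :=
  sInf {n : ℕ | ∃ α ∈ G.lang, X ⊆ G.kernel (letters α) ∧ α.length = n}

end Greedoid

/-- A polymatroid rank function: normalized, monotone, submodular. -/
def IsPolymatroid {A : Type*} (ρ : Set A → ℝ) : Prop :=
  ρ ∅ = 0 ∧ (∀ X Y : Set A, X ⊆ Y → ρ X ≤ ρ Y) ∧
    ∀ X Y : Set A, ρ (X ∪ Y) + ρ (X ∩ Y) ≤ ρ X + ρ Y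

/-- `ρ` represents `G`: the language consists exactly of the simple words each of whose
prefixes of length `i` has rank `i`. -/
def Represents {A : Type*} (ρ : Set A → ℝ) (G : Greedoid A) : Prop :=
  ∀ w : List A, w ∈ G.lang ↔
    (w.Nodup ∧ ∀ i : ℕ, i < w.length → ρ (letters (w.take (i + 1))) = (i + 1 : ℝ))

/-- Polymatroid span. -/
def spanP {A : Type*} (ρ : Set A → ℝ) (X : Set A) : Set A :=
  {y : A | ρ (X ∪ {y}) = ρ X}

/-- Closed sets of a polymatroid. -/
def ClosedP {A : Type*} (ρ : Set A → ℝ) (X : Set A) : Prop := spanP ρ X = X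

/-- Covering relation on the closed sets of `ρ`, ordered by inclusion. -/
def closedCovBy {A : Type*} (ρ : Set A → ℝ) (S S' : Set A) : Prop :=
  ClosedP ρ S ∧ ClosedP ρ S' ∧ S ⊂ S' ∧
    ∀ T : Set A, ClosedP ρ T → S ⊂ T → T ⊂ S' → False

/-- Alignment of a representation. -/
def Aligned {A : Type*} (G : Greedoid A) (ρ : Set A → ℝ) : Prop :=
  ∃ φ : Set (List A) → Set A,
    (∀ F, G.IsFlat F → ClosedP ρ (φ F)) ∧
    (∀ F F', G.IsFlat F → G.IsFlat F' → G.flatLE F F' → φ F ⊆ φ F') ∧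
    (∀ α ∈ G.lang, ρ (letters α) = ρ (φ (G.flatOf α))) ∧
    (∀ α ∈ G.lang, letters α ⊆ φ (G.flatOf α)) ∧
    (∀ F F', G.IsFlat F → G.IsFlat F' → G.flatCovBy F F' → closedCovBy ρ (φ F) (φ F'))

/-- The maps `φ* : F ↦ σ_ρ(κ(F))` and `φ_* : S ↦ κ⁻¹(S)` are well-defined order-preserving
maps between the flats of `G` and the closed sets of `ρ` forming a Galois connection in
which `φ*` preserves the covering relation of the flats. -/
def GaloisPair {A : Type*} (G : Greedoid A) (ρ : Set A → ℝ) : Prop :=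
  (∀ F, G.IsFlat F → ClosedP ρ (spanP ρ (flatKernel F))) ∧
  (∀ F F', G.IsFlat F → G.IsFlat F' → G.flatLE F F' →
      spanP ρ (flatKernel F) ⊆ spanP ρ (flatKernel F')) ∧
  (∀ S, ClosedP ρ S → ∃! F, G.IsFlat F ∧ flatKernel F = G.kernel S) ∧
  (∀ S S', ClosedP ρ S → ClosedP ρ S' → S ⊆ S' →
      ∀ F F', G.IsFlat F → flatKernel F = G.kernel S →
        G.IsFlat F' → flatKernel F' = G.kernel S' → G.flatLE F F') ∧
  (∀ F, G.IsFlat F → ∀ S, ClosedP ρ S → ∀ F', G.IsFlat F' → flatKernel F' = G.kernel S →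
      (spanP ρ (flatKernel F) ⊆ S ↔ G.flatLE F F')) ∧
  (∀ F F', G.IsFlat F → G.IsFlat F' → G.flatCovBy F F' →
      closedCovBy ρ (spanP ρ (flatKernel F)) (spanP ρ (flatKernel F')))

section FK
variable {A : Type*} {G : Greedoid A}

lemma fk_mem_letters {w : List A} {x : A} : x ∈ letters w ↔ x ∈ w := Iff.rfl

lemma fk_letters_append (u v : List A) : letters (u ++ v) = letters u ∪ letters v := by
  ext x; simp [letters]

lemma fk_letters_concat (u : List A) (x : A) : letters (u ++ [x]) = letters u ∪ {x} := by
  ext y; simp [letters, or_comm]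

lemma fk_letters_nil : letters ([] : List A) = ∅ := by
  ext x; simp [letters]

lemma fk_pre {α β : List A} (h : α ++ β ∈ G.lang) : α ∈ G.lang := G.hereditary α β h

lemma fk_take {w : List A} (h : w ∈ G.lang) (n : ℕ) : w.take n ∈ G.lang :=
  fk_pre (by rw [List.take_append_drop]; exact h)

lemma fk_last_not_mem {v : List A} {z : A} (h : v ++ [z] ∈ G.lang) : z ∉ letters v := by
  have hd := List.disjoint_of_nodup_append (G.simple _ h)
  intro hx; exact hd hx (by simp)

lemma fk_exch {α β : List A} (hα : α ∈ G.lang) (hβ : β ∈ G.lang) (h : β.length < α.length) :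
    ∃ t, t ∈ letters α ∧ t ∉ letters β ∧ β ++ [t] ∈ G.lang := by
  obtain ⟨t, ht, htl⟩ := G.exchange α hα β hβ h
  exact ⟨t, ht, fk_last_not_mem htl, htl⟩

lemma fk_len_le {α β : List A} (hα : α ∈ G.lang) (hβ : β ∈ G.lang)
    (h : letters α ⊆ letters β) : α.length ≤ β.length := by
  classical
  have h1 : α.toFinset ⊆ β.toFinset := by
    intro x hx; rw [List.mem_toFinset] at *; exact h hx
  have h2 := Finset.card_le_card h1
  rwa [List.toFinset_card_of_nodup (G.simple _ hα),
    List.toFinset_card_of_nodup (G.simple _ hβ)] at h2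

lemma fk_len_eq {α β : List A} (hα : α ∈ G.lang) (hβ : β ∈ G.lang)
    (h : letters α = letters β) : α.length = β.length :=
  le_antisymm (fk_len_le hα hβ h.le) (fk_len_le hβ hα h.ge)

lemma fk_len_succ {ρ v : List A} {y : A} (hρ : ρ ∈ G.lang) (hv : v ∈ G.lang)
    (h : letters ρ = letters v ∪ {y}) (hy : y ∉ letters v) : ρ.length = v.length + 1 := by
  classical
  have h1 : ρ.toFinset = insert y v.toFinset := by
    ext x
    have hx := Set.ext_iff.mp h x
    simp only [Set.mem_union, Set.mem_singleton_iff, fk_mem_letters] at hx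
    simp only [List.mem_toFinset, Finset.mem_insert]
    tauto
  have h2 : y ∉ v.toFinset := by rwa [List.mem_toFinset]
  have h3 := congrArg Finset.card h1
  rwa [Finset.card_insert_of_notMem h2, List.toFinset_card_of_nodup (G.simple _ hρ),
    List.toFinset_card_of_nodup (G.simple _ hv)] at h3

lemma fk_step {v : List A} {y : A} (hv : v ∈ G.lang) (hy : y ∉ letters v)
    (hf : G.Feasible (letters v ∪ {y})) : v ++ [y] ∈ G.lang := by
  obtain ⟨ρ, hρ, hlρ⟩ := hf
  have hlen : ρ.length = v.length + 1 := fk_len_succ hρ hv hlρ hy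
  obtain ⟨t, ht1, ht2, ht3⟩ := fk_exch hρ hv (by omega)
  have ht4 : t ∈ letters v ∪ {y} := by rw [← hlρ]; exact ht1
  rcases ht4 with h | h
  · exact absurd h ht2
  · rw [Set.mem_singleton_iff] at h; subst h; exact ht3

lemma fk_cont_mem {v : List A} {z : A} : z ∈ G.cont v ↔ v ++ [z] ∈ G.lang := Iff.rfl

lemma fk_cont_letters {v w : List A} (hv : v ∈ G.lang) (hw : w ∈ G.lang)
    (h : letters v = letters w) : G.cont v = G.cont w := by
  have key : ∀ v w : List A, v ∈ G.lang → w ∈ G.lang → letters v = letters w →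
      ∀ z ∈ G.cont v, z ∈ G.cont w := by
    intro v w hv hw h z hz
    rw [fk_cont_mem] at hz ⊢
    have hzv : z ∉ letters v := fk_last_not_mem hz
    exact fk_step hw (h ▸ hzv) ⟨v ++ [z], hz, by rw [fk_letters_concat, h]⟩
  ext z
  exact ⟨fun hz => key v w hv hw h z hz, fun hz => key w v hw hv h.symm z hz⟩

lemma fk_grow (n : ℕ) : ∀ α : List A, α ∈ G.lang → ∀ ζ, ζ ∈ G.lang → ζ.length = α.length + n →
    ∃ δ, α ++ δ ∈ G.lang ∧ (α ++ δ).length = ζ.length ∧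
      letters (α ++ δ) ⊆ letters α ∪ letters ζ := by
  induction n with
  | zero =>
    intro α hα ζ hζ h
    exact ⟨[], by simpa using hα, by simp [h], by simp⟩
  | succ n ih =>
    intro α hα ζ hζ h
    obtain ⟨t, htζ, htα, ht⟩ := fk_exch hζ hα (by omega)
    obtain ⟨δ, h1, h2, h3⟩ := ih (α ++ [t]) ht ζ hζ (by simp; omega)
    refine ⟨[t] ++ δ, ?_, ?_, ?_⟩
    · rw [← List.append_assoc]; exact h1
    · rw [← List.append_assoc]; exact h2
    · rw [← List.append_assoc]
      intro x hx
      rcases h3 hx with hx' | hx'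
    -- hx' : x ∈ letters (α ++ [t]) or x ∈ letters ζ
      · rw [fk_letters_concat] at hx'
        rcases hx' with hx'' | hx''
        · exact Or.inl hx''
        · rw [Set.mem_singleton_iff] at hx''; subst hx''; exact Or.inr htζ
      · exact Or.inr hx'

lemma fk_rank {η ζ : List A} (hη : η ∈ G.lang) (hζ : ζ ∈ G.lang)
    (hdead : ∀ y ∈ letters η, y ∉ letters ζ → ¬ G.Feasible (letters ζ ∪ {y})) :
    ∀ ρ, ρ ∈ G.lang → letters ρ ⊆ letters η ∪ letters ζ → ρ.length ≤ ζ.length := by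
  intro ρ hρ hsub
  by_contra hgt
  push_neg at hgt
  have hρ' : ρ.take (ζ.length + 1) ∈ G.lang := fk_take hρ _
  have hρ'len : (ρ.take (ζ.length + 1)).length = ζ.length + 1 := by
    simp [List.length_take]; omega
  obtain ⟨t, ht1, ht2, ht3⟩ := fk_exch hρ' hζ (by omega)
  have htρ : t ∈ letters ρ := List.take_subset _ _ ht1
  have htη : t ∈ letters η := by
    rcases hsub htρ with h | h
    · exact h
    · exact absurd h ht2
  exact hdead t htη ht2 ⟨ζ ++ [t], ht3, fk_letters_concat ζ t⟩


lemma fk_W1 (hint : G.IntervalProperty) :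
    ∀ η, η ∈ G.lang → ∀ ζ, ζ ∈ G.lang →
    (∀ y ∈ letters η, y ∉ letters ζ → ¬ G.Feasible (letters ζ ∪ {y})) →
    ∀ z, z ∉ letters η → z ∉ letters ζ → G.Feasible (letters ζ ∪ {z}) →
    ∀ y ∈ letters η, y ∉ letters ζ → ¬ G.Feasible (letters ζ ∪ {z} ∪ {y}) := by
  intro η
  induction η using List.reverseRecOn with
  | nil =>
    intro _ ζ _ _ z _ _ _ y hy
    rw [fk_letters_nil] at hy; exact absurd hy (Set.notMem_empty y)
  | append_singleton η₀ w ih =>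
    intro hη ζ hζ hdead z hzη hzζ hzfeas y hyη hyζ hbad
    have hη₀ : η₀ ∈ G.lang := fk_pre hη
    have hwη₀ : w ∉ letters η₀ := fk_last_not_mem hη
    have hlet : letters (η₀ ++ [w]) = letters η₀ ∪ {w} := fk_letters_concat η₀ w
    have hdead₀ : ∀ y' ∈ letters η₀, y' ∉ letters ζ → ¬ G.Feasible (letters ζ ∪ {y'}) := by
      intro y' h1 h2; exact hdead y' (by rw [hlet]; exact Or.inl h1) h2
    have hzη₀ : z ∉ letters η₀ := fun h => hzη (by rw [hlet]; exact Or.inl h)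
    by_cases hyw : y ∈ letters η₀
    · exact ih hη₀ ζ hζ hdead₀ z hzη₀ hzζ hzfeas y hyw hyζ hbad
    · have hyw' : y = w := by
        rw [hlet] at hyη
        rcases hyη with h | h
        · exact absurd h hyw
        · exact h
      subst hyw'
      -- deadness of η₀ at ζ + z, from IH
      have ihdead : ∀ u ∈ letters η₀, u ∉ letters ζ → ¬ G.Feasible (letters ζ ∪ {z} ∪ {u}) :=
        fun u h1 h2 => ih hη₀ ζ hζ hdead₀ z hzη₀ hzζ hzfeas u h1 h2
      -- rank bound
      have hrk : ∀ ρ, ρ ∈ G.lang → letters ρ ⊆ letters (η₀ ++ [y]) ∪ letters ζ →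
          ρ.length ≤ ζ.length := fk_rank hη hζ hdead
      have hwζ : y ∉ letters ζ := hyζ
      -- grow η₀ toward ζ
      have hlen₀ : η₀.length ≤ ζ.length :=
        hrk η₀ hη₀ (fun x hx => Or.inl (by rw [hlet]; exact Or.inl hx))
      obtain ⟨δ, hg₀, hg₀len, hg₀sub⟩ := fk_grow (ζ.length - η₀.length) η₀ hη₀ ζ hζ (by omega)
      have hzg₀ : z ∉ letters (η₀ ++ δ) := fun h => by
        rcases hg₀sub h with h' | h'
        · exact hzη₀ h'
        · exact hzζ h'
      have hwg₀ : y ∉ letters (η₀ ++ δ) := fun h => by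
        rcases hg₀sub h with h' | h'
        · exact hwη₀ h'
        · exact hwζ h'
      obtain ⟨ξ, hξ, hξl⟩ := hbad
      have hzw : z ≠ y := fun h => hzη (by rw [hlet, h]; exact Or.inr rfl)
      obtain ⟨ψ, hψ, hψl⟩ := hzfeas
      have hψlen : ψ.length = ζ.length + 1 := fk_len_succ hψ hζ hψl hzζ
      have hwψ : y ∉ letters ψ := by
        rw [hψl]
        rintro (h | h)
        · exact hwζ h
        · rw [Set.mem_singleton_iff] at h; exact hzw h.symm
      have hξlen : ξ.length = ζ.length + 2 := by
        have : ξ.length = ψ.length + 1 := fk_len_succ hξ hψ (by rw [hξl, hψl]) hwψ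
        omega
      -- exchange ξ against g₀ := η₀ ++ δ
      obtain ⟨t, ht1, ht2, ht3⟩ := fk_exch hξ hg₀ (by omega)
      have htz : t = z := by
        by_contra hne
        have ht' : t ∈ letters (η₀ ++ [y]) ∪ letters ζ := by
          rw [hξl] at ht1
          rcases ht1 with (h | h) | h
          · exact Or.inr h
          · rw [Set.mem_singleton_iff] at h; exact absurd h hne
          · rw [Set.mem_singleton_iff] at h; subst h
            exact Or.inl (by rw [hlet]; exact Or.inr rfl)
        have hlen' : ((η₀ ++ δ) ++ [t]).length ≤ ζ.length := by
          apply hrk _ ht3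
          rw [fk_letters_concat]
          rintro x (hx | hx)
          · rcases hg₀sub hx with h | h
            · exact Or.inl (by rw [hlet]; exact Or.inl h)
            · exact Or.inr h
          · rw [Set.mem_singleton_iff] at hx; subst hx; exact ht'
        rw [List.length_append, List.length_singleton] at hlen'
        omega
      subst htz
      have hh₀ : (η₀ ++ δ) ++ [t] ∈ G.lang := ht3
      have hh₀len : ((η₀ ++ δ) ++ [t]).length = ζ.length + 1 := by
        rw [List.length_append, List.length_singleton]; omega
      -- exchange ξ against h₀
      obtain ⟨t', ht'1, ht'2, ht'3⟩ := fk_exch hξ hh₀ (by omega)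
      have ht'g : t' ∉ letters (η₀ ++ δ) := fun h =>
        ht'2 (by rw [fk_letters_concat]; exact Or.inl h)
      have ht't : t' ≠ t := fun h =>
        ht'2 (by rw [fk_letters_concat, h]; exact Or.inr rfl)
      have ht'cases : t' = y ∨ t' ∈ letters ζ := by
        rw [hξl] at ht'1
        rcases ht'1 with (h | h) | h
        · exact Or.inr h
        · rw [Set.mem_singleton_iff] at h; exact absurd h ht't
        · rw [Set.mem_singleton_iff] at h; exact Or.inl h
      rcases ht'cases with ht'y | ht'ζ
      · -- t' = y : interval property gives Feasible (letters g₀ ∪ {y}), contradiction with rank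
        subst ht'y
        have hwh₀ : t' ∉ letters ((η₀ ++ δ) ++ [t]) := by
          rw [fk_letters_concat]
          rintro (h | h)
          · exact hwg₀ h
          · rw [Set.mem_singleton_iff] at h; exact hzw h.symm
        have hmid : G.Feasible (letters (η₀ ++ δ) ∪ {t'}) := by
          apply hint (letters η₀) (letters (η₀ ++ δ)) (letters ((η₀ ++ δ) ++ [t]))
            ⟨η₀, hη₀, rfl⟩ ⟨η₀ ++ δ, hg₀, rfl⟩ ⟨(η₀ ++ δ) ++ [t], hh₀, rfl⟩
            (by rw [fk_letters_append]; exact Set.subset_union_left)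
            (by rw [fk_letters_concat]; exact Set.subset_union_left)
            t' hwh₀ ⟨η₀ ++ [t'], hη, fk_letters_concat η₀ t'⟩
            ⟨((η₀ ++ δ) ++ [t]) ++ [t'], ht'3, fk_letters_concat _ _⟩
        obtain ⟨ρ, hρ, hρl⟩ := hmid
        have hρlen : ρ.length = ζ.length + 1 := by
          have := fk_len_succ hρ hg₀ hρl hwg₀
          omega
        have : ρ.length ≤ ζ.length := by
          apply hrk ρ hρ
          rw [hρl]
          rintro x (hx | hx)
          · rcases hg₀sub hx with h | h
            · exact Or.inl (by rw [hlet]; exact Or.inl h)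
            · exact Or.inr h
          · rw [Set.mem_singleton_iff] at hx; subst hx
            exact Or.inl (by rw [hlet]; exact Or.inr rfl)
        omega
      · -- t' ∈ ζ : get w₂, exchange against ψ to contradict ihdead
        have hw₂ : ((η₀ ++ δ) ++ [t]) ++ [t'] ∈ G.lang := ht'3
        have hw₂len : (((η₀ ++ δ) ++ [t]) ++ [t']).length = ζ.length + 2 := by
          rw [List.length_append, List.length_singleton]; omega
        obtain ⟨u, hu1, hu2, hu3⟩ := fk_exch hw₂ hψ (by omega)
        have huψ : u ∉ letters ζ ∧ u ≠ t := by
          rw [hψl] at hu2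
          constructor
          · exact fun h => hu2 (Or.inl h)
          · exact fun h => hu2 (Or.inr (by rw [h]; rfl))
        have huη₀ : u ∈ letters η₀ := by
          rw [fk_letters_concat, fk_letters_concat] at hu1
          rcases hu1 with (h | h) | h
          · rcases hg₀sub h with h' | h'
            · exact h'
            · exact absurd h' huψ.1
          · rw [Set.mem_singleton_iff] at h; exact absurd h huψ.2
          · rw [Set.mem_singleton_iff] at h; subst h; exact absurd ht'ζ huψ.1
        exact ihdead u huη₀ huψ.1 ⟨ψ ++ [u], hu3, by rw [fk_letters_concat, hψl]⟩


lemma fk_star (hint : G.IntervalProperty) {α β : List A} (hα : α ∈ G.lang) (hβ : β ∈ G.lang)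
    (hc : G.cont α = G.cont β) :
    ∀ δ, α ++ δ ∈ G.lang → ∀ y ∈ letters β, y ∉ letters (α ++ δ) →
      ¬ G.Feasible (letters (α ++ δ) ∪ {y}) := by
  intro δ
  induction δ using List.reverseRecOn with
  | nil =>
    intro hαδ y hyβ hyα hfeas
    rw [List.append_nil] at hαδ hyα hfeas
    have h1 : α ++ [y] ∈ G.lang := fk_step hα hyα hfeas
    have h2 : y ∈ G.cont β := hc ▸ h1
    exact fk_last_not_mem (fk_cont_mem.mp h2) hyβ
  | append_singleton δ₀ z ih =>
    intro hαδ y hyβ hyαδ hfeas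
    have hassoc : α ++ (δ₀ ++ [z]) = (α ++ δ₀) ++ [z] := (List.append_assoc _ _ _).symm
    rw [hassoc] at hαδ hyαδ hfeas
    have hζ : α ++ δ₀ ∈ G.lang := fk_pre hαδ
    have hzζ : z ∉ letters (α ++ δ₀) := fk_last_not_mem hαδ
    have hzfeas : G.Feasible (letters (α ++ δ₀) ∪ {z}) := ⟨(α ++ δ₀) ++ [z], hαδ, fk_letters_concat _ _⟩
    have hzβ : z ∉ letters β := fun hzβ => ih hζ z hzβ hzζ hzfeas
    have hyζ : y ∉ letters (α ++ δ₀) := fun h =>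
      hyαδ (by rw [fk_letters_concat]; exact Or.inl h)
    have hW1 := fk_W1 hint β hβ (α ++ δ₀) hζ (fun y' h1 h2 => ih hζ y' h1 h2)
      z hzβ hzζ hzfeas y hyβ hyζ
    apply hW1
    rw [fk_letters_concat] at hfeas
    exact hfeas

lemma fk_cont_len {α β : List A} (hα : α ∈ G.lang) (hβ : β ∈ G.lang)
    (hc : G.cont α = G.cont β) : α.length = β.length := by
  have key : ∀ α β : List A, α ∈ G.lang → β ∈ G.lang → G.cont α = G.cont β →
      ¬ β.length < α.length := by
    intro α β hα hβ hc hlt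
    obtain ⟨t, ht1, ht2, ht3⟩ := fk_exch hα hβ hlt
    have h1 : t ∈ G.cont β := ht3
    have h2 : α ++ [t] ∈ G.lang := fk_cont_mem.mp (hc ▸ h1)
    exact fk_last_not_mem h2 ht1
  have h1 := key α β hα hβ hc
  have h2 := key β α hβ hα hc.symm
  omega

lemma fk_cstep_incl (hint : G.IntervalProperty) {α β : List A} (hα : α ∈ G.lang) (hβ : β ∈ G.lang)
    (hc : G.cont α = G.cont β) {u z : A}
    (hαu : α ++ [u] ∈ G.lang) (hz : (α ++ [u]) ++ [z] ∈ G.lang) : (β ++ [u]) ++ [z] ∈ G.lang := by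
  have hβu : β ++ [u] ∈ G.lang := fk_cont_mem.mp (hc ▸ (fk_cont_mem.mpr hαu))
  have hzβ : z ∉ letters β := by
    intro hzβ
    exact fk_star hint hα hβ hc [u] hαu z hzβ (fk_last_not_mem hz)
      ⟨(α ++ [u]) ++ [z], hz, fk_letters_concat _ _⟩
  have hlen := fk_cont_len hα hβ hc
  obtain ⟨t, ht1, ht2, ht3⟩ := fk_exch hz hβu
    (by rw [List.length_append, List.length_append, List.length_append]; simp; omega)
  have htz : t = z := by
    by_contra hne
    have htα : t ∈ letters α := by
      rw [fk_letters_concat, fk_letters_concat] at ht1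
      rcases ht1 with (h | h) | h
      · exact h
      · rw [Set.mem_singleton_iff] at h; subst h
        exact absurd (by rw [fk_letters_concat]; exact Or.inr rfl) ht2
      · rw [Set.mem_singleton_iff] at h; exact absurd h hne
    exact fk_star hint hβ hα hc.symm [u] hβu t htα ht2
      ⟨(β ++ [u]) ++ [t], ht3, fk_letters_concat _ _⟩
  subst htz; exact ht3

lemma fk_cstep (hint : G.IntervalProperty) {α β : List A} (hα : α ∈ G.lang) (hβ : β ∈ G.lang)
    (hc : G.cont α = G.cont β) {u : A}
    (hαu : α ++ [u] ∈ G.lang) : β ++ [u] ∈ G.lang ∧ G.cont (α ++ [u]) = G.cont (β ++ [u]) := by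
  have hβu : β ++ [u] ∈ G.lang := fk_cont_mem.mp (hc ▸ (fk_cont_mem.mpr hαu))
  refine ⟨hβu, ?_⟩
  ext z
  constructor
  · intro hz; exact fk_cstep_incl hint hα hβ hc hαu hz
  · intro hz; exact fk_cstep_incl hint hβ hα hc.symm hβu hz

lemma fk_congr (hint : G.IntervalProperty) :
    ∀ γ (α β : List A), α ∈ G.lang → β ∈ G.lang → G.cont α = G.cont β →
    α ++ γ ∈ G.lang → β ++ γ ∈ G.lang ∧ G.cont (α ++ γ) = G.cont (β ++ γ) := by
  intro γ
  induction γ with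
  | nil =>
    intro α β hα hβ hc h
    rw [List.append_nil, List.append_nil]
    exact ⟨hβ, hc⟩
  | cons c γ' ih =>
    intro α β hα hβ hc h
    have hconsα : α ++ (c :: γ') = (α ++ [c]) ++ γ' := by simp
    have hconsβ : β ++ (c :: γ') = (β ++ [c]) ++ γ' := by simp
    rw [hconsα] at h ⊢
    rw [hconsβ]
    have hαc : α ++ [c] ∈ G.lang := fk_pre h
    obtain ⟨hβc, hc'⟩ := fk_cstep hint hα hβ hc hαc
    exact ih (α ++ [c]) (β ++ [c]) hαc hβc hc' h


lemma fk_insert (hint : G.IntervalProperty) {μ : List A} {x : A} (hμ : μ ∈ G.lang)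
    (hμx : μ ++ [x] ∈ G.lang) :
    ∀ γ, μ ++ γ ∈ G.lang → x ∉ letters (μ ++ γ) → G.Feasible (letters (μ ++ γ) ∪ {x}) →
      (μ ++ [x]) ++ γ ∈ G.lang := by
  intro γ
  induction γ using List.reverseRecOn with
  | nil => intro _ _ _; rw [List.append_nil]; exact hμx
  | append_singleton γ₀ c ih =>
    intro hμγ hx hfeas
    have hassoc : μ ++ (γ₀ ++ [c]) = (μ ++ γ₀) ++ [c] := (List.append_assoc _ _ _).symm
    rw [hassoc] at hμγ hx hfeas
    have hμγ₀ : μ ++ γ₀ ∈ G.lang := fk_pre hμγ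
    have hcγ₀ : c ∉ letters (μ ++ γ₀) := fk_last_not_mem hμγ
    have hsub : letters (μ ++ γ₀) ⊆ letters ((μ ++ γ₀) ++ [c]) := by
      rw [fk_letters_concat]; exact Set.subset_union_left
    have hxγ₀ : x ∉ letters (μ ++ γ₀) := fun h => hx (hsub h)
    have hfeas₀ : G.Feasible (letters (μ ++ γ₀) ∪ {x}) := by
      apply hint (letters μ) (letters (μ ++ γ₀)) (letters ((μ ++ γ₀) ++ [c]))
        ⟨μ, hμ, rfl⟩ ⟨μ ++ γ₀, hμγ₀, rfl⟩ ⟨(μ ++ γ₀) ++ [c], hμγ, rfl⟩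
        (by rw [fk_letters_append]; exact Set.subset_union_left) hsub
        x hx ⟨μ ++ [x], hμx, fk_letters_concat μ x⟩ hfeas
    have hrec : (μ ++ [x]) ++ γ₀ ∈ G.lang := ih hμγ₀ hxγ₀ hfeas₀
    have hxc : x ≠ c := fun h => hx (by rw [fk_letters_concat, h]; exact Or.inr rfl)
    have hlet : letters ((μ ++ [x]) ++ γ₀) = letters (μ ++ γ₀) ∪ {x} := by
      rw [fk_letters_append, fk_letters_concat, fk_letters_append]
      ext s; simp only [Set.mem_union]; tauto
    have hcnot : c ∉ letters ((μ ++ [x]) ++ γ₀) := by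
      rw [hlet]
      rintro (h | h)
      · exact hcγ₀ h
      · rw [Set.mem_singleton_iff] at h; exact hxc h.symm
    have hstep : ((μ ++ [x]) ++ γ₀) ++ [c] ∈ G.lang := by
      apply fk_step hrec hcnot
      have heq : letters ((μ ++ [x]) ++ γ₀) ∪ {c} = letters ((μ ++ γ₀) ++ [c]) ∪ {x} := by
        rw [hlet, fk_letters_concat]
        ext s; simp only [Set.mem_union]; tauto
      rw [heq]; exact hfeas
    rw [← List.append_assoc]
    exact hstep

lemma fk_retrace : ∀ (σ v ρ : List A), v ∈ G.lang → ρ ∈ G.lang → letters v = letters ρ →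
    ρ ++ σ ∈ G.lang → v ++ σ ∈ G.lang := by
  intro σ
  induction σ with
  | nil => intro v ρ hv _ _ _; rw [List.append_nil]; exact hv
  | cons c σ' ih =>
    intro v ρ hv hρ hlet h
    have h1 : (ρ ++ [c]) ++ σ' ∈ G.lang := by rw [List.append_assoc]; simpa using h
    have hρc : ρ ++ [c] ∈ G.lang := fk_pre h1
    have hcρ : c ∉ letters ρ := fk_last_not_mem hρc
    have hvc : v ++ [c] ∈ G.lang :=
      fk_step hv (hlet ▸ hcρ) ⟨ρ ++ [c], hρc, by rw [fk_letters_concat, hlet]⟩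
    have h2 := ih (v ++ [c]) (ρ ++ [c]) hvc hρc
      (by rw [fk_letters_concat, fk_letters_concat, hlet]) h1
    rw [List.append_assoc] at h2; simpa using h2

lemma fk_replace : ∀ (σ ρ v : List A) (c x : A), ρ ∈ G.lang → v ∈ G.lang →
    ρ ++ σ ∈ G.lang → v.length = ρ.length →
    letters v ∪ {c} = letters ρ ∪ {x} →
    c ∈ letters ρ → c ∉ letters v → x ∉ letters (ρ ++ σ) →
    (∀ τ, τ <+: σ → ¬ G.Feasible (letters (ρ ++ τ) ∪ {x})) →
    v ++ σ ∈ G.lang := by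
  intro σ
  induction σ with
  | nil => intro ρ v c x hρ hv _ _ _ _ _ _ _; rw [List.append_nil]; exact hv
  | cons d σ' ih =>
    intro ρ v c x hρ hv hρσ hlen hset hcρ hcv hxρσ hdead
    have h1 : (ρ ++ [d]) ++ σ' ∈ G.lang := by rw [List.append_assoc]; simpa using hρσ
    have hρd : ρ ++ [d] ∈ G.lang := fk_pre h1
    have hdρ : d ∉ letters ρ := fk_last_not_mem hρd
    have hcd : c ≠ d := fun h => hdρ (h ▸ hcρ)
    have hxd : x ≠ d := fun h => hxρσ (by
      rw [fk_letters_append, h]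
      exact Or.inr (by simp [letters]))
    obtain ⟨t, ht1, ht2, ht3⟩ := fk_exch hρd hv
      (by rw [List.length_append, List.length_singleton]; omega)
    have htcd : t = c ∨ t = d := by
      rw [fk_letters_concat] at ht1
      rcases ht1 with h | h
      · have h2 : t ∈ letters v ∪ {c} := by rw [hset]; exact Or.inl h
        rcases h2 with h2 | h2
        · exact absurd h2 ht2
        · exact Or.inl h2
      · exact Or.inr h
    rcases htcd with rfl | rfl
    · exfalso
      apply hdead [] List.nil_prefix
      refine ⟨v ++ [t], ht3, ?_⟩
      rw [List.append_nil, fk_letters_concat, hset]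
    · -- t = d : recurse
      have hvd : v ++ [t] ∈ G.lang := ht3
      have hres := ih (ρ ++ [t]) (v ++ [t]) c x hρd hvd h1
        (by rw [List.length_append, List.length_append]; omega)
        (by rw [fk_letters_concat, fk_letters_concat]
            ext s; have := Set.ext_iff.mp hset s
            simp only [Set.mem_union, Set.mem_singleton_iff] at this ⊢
            tauto)
        (by rw [fk_letters_concat]; exact Or.inl hcρ)
        (by rw [fk_letters_concat]
            rintro (h | h)
            · exact hcv h
            · rw [Set.mem_singleton_iff] at h; exact hcd h)
        (by rw [List.append_assoc]; simpa using hxρσ)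
        (by intro τ hτ
            have h2 := hdead (t :: τ) (by
              obtain ⟨r, hr⟩ := hτ
              exact ⟨r, by rw [← hr]; simp⟩)
            rw [show ρ ++ (t :: τ) = (ρ ++ [t]) ++ τ by simp] at h2
            exact h2)
      rw [List.append_assoc] at hres; simpa using hres

lemma fk_swap {W T : List A} {c x : A} (hW : W ∈ G.lang) (hT : T ∈ G.lang)
    (hset : letters W ∪ {c} = letters T ∪ {x})
    (hcT : c ∈ letters T) (hcW : c ∉ letters W) (hxW : x ∈ letters W) (hxT : x ∉ letters T)
    (hdead : ¬ G.Feasible (letters T ∪ {x})) : G.cont W = G.cont T := by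
  classical
  have hcx : c ≠ x := fun h => hxT (h ▸ hcT)
  have hlen : W.length = T.length := by
    have h1 : insert c W.toFinset = insert x T.toFinset := by
      ext s
      have := Set.ext_iff.mp hset s
      simp only [Set.mem_union, Set.mem_singleton_iff, fk_mem_letters] at this
      simp only [Finset.mem_insert, List.mem_toFinset]
      tauto
    have h2 : c ∉ W.toFinset := by rwa [List.mem_toFinset]
    have h3 : x ∉ T.toFinset := by rwa [List.mem_toFinset]
    have h4 := congrArg Finset.card h1
    rw [Finset.card_insert_of_notMem h2, Finset.card_insert_of_notMem h3,
      List.toFinset_card_of_nodup (G.simple _ hW),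
      List.toFinset_card_of_nodup (G.simple _ hT)] at h4
    omega
  ext z
  simp only [fk_cont_mem]
  constructor
  · intro hz
    have hzW : z ∉ letters W := fk_last_not_mem hz
    have hzc : z ≠ c := by
      intro h
      exact hdead ⟨W ++ [z], hz, by rw [fk_letters_concat, h, hset]⟩
    obtain ⟨t, ht1, ht2, ht3⟩ := fk_exch hz hT
      (by rw [List.length_append, List.length_singleton]; omega)
    have htz : t = z := by
      rw [fk_letters_concat] at ht1
      rcases ht1 with h | h
      · have h2 : t ∈ letters T ∪ {x} := by rw [← hset]; exact Or.inl h
        rcases h2 with h2 | h2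
        · exact absurd h2 ht2
        · rw [Set.mem_singleton_iff] at h2; subst h2
          exact absurd ⟨T ++ [t], ht3, fk_letters_concat _ _⟩ hdead
      · rw [Set.mem_singleton_iff] at h; exact h
    subst htz; exact ht3
  · intro hz
    have hzT : z ∉ letters T := fk_last_not_mem hz
    have hzx : z ≠ x := by
      intro h
      exact hdead ⟨T ++ [z], hz, by rw [fk_letters_concat, h]⟩
    obtain ⟨t, ht1, ht2, ht3⟩ := fk_exch hz hW
      (by rw [List.length_append, List.length_singleton]; omega)
    have htz : t = z := by
      rw [fk_letters_concat] at ht1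
      rcases ht1 with h | h
      · have h2 : t ∈ letters W ∪ {c} := by rw [hset]; exact Or.inl h
        rcases h2 with h2 | h2
        · exact absurd h2 ht2
        · rw [Set.mem_singleton_iff] at h2; subst h2
          exfalso
          apply hdead
          refine ⟨W ++ [t], ht3, ?_⟩
          rw [fk_letters_concat, hset]
      · rw [Set.mem_singleton_iff] at h; exact h
    subst htz; exact ht3

end FK

set_option maxHeartbeats 1000000 in
/-- **Forking Lemma.** In an interval greedoid, if `[μ]` is a meet of flats `F` and `F'`,
`μx ∈ Λ`, `[μx] ⊑ F'` and not `[μx] ⊑ F`, then `x` is a continuation of `F`. -/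

theorem forking_lemma {A : Type*} [Fintype A] (G : Greedoid A)
    (hint : G.IntervalProperty)
    (F F' : Set (List A)) (hF : G.IsFlat F) (hF' : G.IsFlat F')
    (mu : List A) (hmu : mu ∈ G.lang)
    (hmeet : G.IsMeet (G.flatOf mu) F F')
    (x : A) (hx : mu ++ [x] ∈ G.lang)
    (hle : G.flatLE (G.flatOf (mu ++ [x])) F')
    (hnle : ¬ G.flatLE (G.flatOf (mu ++ [x])) F) :
    ∀ α ∈ F, α ++ [x] ∈ G.lang := by
  classical
  obtain ⟨α₀, hα₀, hFeq⟩ := hF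
  subst hFeq
  obtain ⟨hMflat, hMF, hMF', hMuniv⟩ := hmeet
  obtain ⟨a, ha, γa, haγ, haγF⟩ := hMF
  have ha1 : a ∈ G.lang := ha.1
  have ha2 : G.cont a = G.cont mu := ha.2
  obtain ⟨hμγ, hcγ⟩ := fk_congr hint γa a mu ha1 hmu ha2 haγ
  have hcF : G.cont (mu ++ γa) = G.cont α₀ := by
    rw [← hcγ]; exact haγF.2
  suffices hx2 : (mu ++ γa) ++ [x] ∈ G.lang by
    intro α' hα'
    have h1 : G.cont α' = G.cont (mu ++ γa) := by rw [hα'.2, ← hcF]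
    have h2 : x ∈ G.cont α' := by rw [h1]; exact hx2
    exact h2
  by_contra hxbad
  exfalso; apply hnle
  have hxμ : x ∉ letters mu := fk_last_not_mem hx
  by_cases hxT : x ∈ letters (mu ++ γa)
  · -- x occurs in γa : pure reshuffling
    have hxγ : x ∈ γa := by
      rw [fk_letters_append] at hxT
      rcases hxT with h | h
      · exact absurd h hxμ
      · exact h
    obtain ⟨s, t, hst⟩ := List.append_of_mem hxγ
    subst hst
    have hT' : mu ++ (s ++ x :: t) = ((mu ++ s) ++ [x]) ++ t := by simp
    have hρσ : ((mu ++ s) ++ [x]) ++ t ∈ G.lang := by rw [← hT']; exact hμγ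
    have hp : (mu ++ s) ++ [x] ∈ G.lang := fk_pre hρσ
    have hμs : mu ++ s ∈ G.lang := fk_pre hp
    have hxμs : x ∉ letters (mu ++ s) := fk_last_not_mem hp
    have hv₀ : (mu ++ [x]) ++ s ∈ G.lang :=
      fk_insert hint hmu hx s hμs hxμs ⟨(mu ++ s) ++ [x], hp, fk_letters_concat _ _⟩
    have hlet : letters ((mu ++ [x]) ++ s) = letters ((mu ++ s) ++ [x]) := by
      ext q; simp [letters]; tauto
    have hW0 : ((mu ++ [x]) ++ s) ++ t ∈ G.lang := fk_retrace t _ _ hv₀ hp hlet hρσ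
    have hWlet : letters (((mu ++ [x]) ++ s) ++ t) = letters (mu ++ (s ++ x :: t)) := by
      ext q; simp [letters]; tauto
    have hWcont : G.cont (((mu ++ [x]) ++ s) ++ t) = G.cont α₀ := by
      rw [fk_cont_letters hW0 hμγ hWlet]; exact hcF
    have hfix : (mu ++ [x]) ++ (s ++ t) = ((mu ++ [x]) ++ s) ++ t :=
      (List.append_assoc _ _ _).symm
    refine ⟨mu ++ [x], ⟨hx, rfl⟩, s ++ t, ?_, ?_, ?_⟩
    · rw [hfix]; exact hW0
    · rw [hfix]; exact hW0
    · rw [hfix]; exact hWcont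
  · -- x does not occur in mu ++ γa
    have hTdead : ¬ G.Feasible (letters (mu ++ γa) ∪ {x}) := fun h => hxbad (fk_step hμγ hxT h)
    haveI : DecidablePred (fun j => G.Feasible (letters (mu ++ γa.take j) ∪ {x})) :=
      Classical.decPred _
    set i := Nat.findGreatest (fun j => G.Feasible (letters (mu ++ γa.take j) ∪ {x}))
      γa.length with hidef
    have hP0 : G.Feasible (letters (mu ++ γa.take 0) ∪ {x}) := by
      rw [List.take_zero, List.append_nil]
      exact ⟨mu ++ [x], hx, fk_letters_concat _ _⟩
    have hPi : G.Feasible (letters (mu ++ γa.take i) ∪ {x}) := by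
      rw [hidef]
      exact Nat.findGreatest_spec
        (P := fun j => G.Feasible (letters (mu ++ γa.take j) ∪ {x})) (Nat.zero_le _) hP0
    have hile : i ≤ γa.length := by rw [hidef]; exact Nat.findGreatest_le _
    have hilt : i < γa.length := by
      by_contra hge
      have hieq : i = γa.length := le_antisymm hile (not_lt.mp hge)
      apply hTdead
      have h2 := hPi
      rw [hieq, List.take_length] at h2
      exact h2
    have hgt : ∀ j, i < j → j ≤ γa.length →
        ¬ G.Feasible (letters (mu ++ γa.take j) ∪ {x}) := by
      intro j h1 h2
      rw [hidef] at h1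
      exact Nat.findGreatest_is_greatest h1 h2
    set c := γa.get ⟨i, hilt⟩ with hcdef
    have htake : γa.take i ++ [c] = γa.take (i + 1) := by
      have h0 := List.take_concat_get hilt
      rw [List.concat_eq_append] at h0
      rw [hcdef]
      simpa [List.get_eq_getElem] using h0
    have hρfull : (mu ++ γa.take (i+1)) ++ γa.drop (i+1) ∈ G.lang := by
      rw [List.append_assoc, List.take_append_drop]; exact hμγ
    have hρ : mu ++ γa.take (i+1) ∈ G.lang := fk_pre hρfull
    have hρ' : (mu ++ γa.take i) ++ [c] ∈ G.lang := by
      rw [List.append_assoc, htake]; exact hρ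
    have hμti : mu ++ γa.take i ∈ G.lang := fk_pre hρ'
    have hsubT : ∀ j, letters (mu ++ γa.take j) ⊆ letters (mu ++ γa) := by
      intro j q hq
      rw [fk_letters_append] at hq ⊢
      rcases hq with h | h
      · exact Or.inl h
      · exact Or.inr (List.take_subset _ _ h)
    have hxti : x ∉ letters (mu ++ γa.take i) := fun h => hxT (hsubT i h)
    have hwi : (mu ++ [x]) ++ γa.take i ∈ G.lang := fk_insert hint hmu hx _ hμti hxti hPi
    have hcmem : c ∈ γa := by rw [hcdef]; exact γa.get_mem _
    have hcT : c ∈ letters (mu ++ γa) := by rw [fk_letters_append]; exact Or.inr hcmem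
    have hcx : c ≠ x := fun h => hxT (h ▸ hcT)
    have hcρmem : c ∈ letters (mu ++ γa.take (i+1)) := by
      rw [fk_letters_append, ← htake, fk_letters_concat]
      right; right; rfl
    have hcti : c ∉ letters (mu ++ γa.take i) := fk_last_not_mem hρ'
    have hletv : letters ((mu ++ [x]) ++ γa.take i) =
        letters (mu ++ γa.take i) ∪ {x} := by
      ext q; simp [letters]; tauto
    have hcnotv : c ∉ letters ((mu ++ [x]) ++ γa.take i) := by
      rw [hletv]
      rintro (h | h)
      · exact hcti h
      · rw [Set.mem_singleton_iff] at h; exact hcx h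
    have hxdropT : x ∉ letters ((mu ++ γa.take (i+1)) ++ γa.drop (i+1)) := by
      intro h; apply hxT
      rw [List.append_assoc, List.take_append_drop] at h; exact h
    have hdeadrep : ∀ τ, τ <+: γa.drop (i+1) →
        ¬ G.Feasible (letters ((mu ++ γa.take (i+1)) ++ τ) ∪ {x}) := by
      intro τ hτ
      have hpre : γa.take (i+1) ++ τ <+: γa := by
        obtain ⟨r, hr⟩ := hτ
        exact ⟨r, by rw [List.append_assoc, hr, List.take_append_drop]⟩
      have hlenτ : (γa.take (i+1) ++ τ).length = i + 1 + τ.length := by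
        rw [List.length_append, List.length_take]; omega
      have heq : γa.take (i+1) ++ τ = γa.take (i + 1 + τ.length) := by
        have h1 := List.prefix_iff_eq_take.mp hpre
        rw [hlenτ] at h1; exact h1
      have hbound : i + 1 + τ.length ≤ γa.length := by
        have h2 := hpre.length_le
        rw [hlenτ] at h2; exact h2
      intro hfeas
      apply hgt (i + 1 + τ.length) (by omega) hbound
      rw [← heq, ← List.append_assoc]
      exact hfeas
    have hlenrep : ((mu ++ [x]) ++ γa.take i).length = (mu ++ γa.take (i+1)).length := by
      simp [List.length_append, List.length_take]
      omega
    have hsetrep : letters ((mu ++ [x]) ++ γa.take i) ∪ {c} =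
        letters (mu ++ γa.take (i+1)) ∪ {x} := by
      rw [← htake]
      ext q; simp [letters]; tauto
    have hWrep : ((mu ++ [x]) ++ γa.take i) ++ γa.drop (i+1) ∈ G.lang :=
      fk_replace (γa.drop (i+1)) (mu ++ γa.take (i+1)) ((mu ++ [x]) ++ γa.take i) c x
        hρ hwi hρfull hlenrep hsetrep hcρmem hcnotv hxdropT hdeadrep
    have hcdropnot : c ∉ letters (γa.drop (i+1)) := by
      have hnd : γa.Nodup := (G.simple _ hμγ).of_append_right
      have h2 : γa.take (i+1) ++ γa.drop (i+1) = γa := List.take_append_drop _ _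
      have hd := List.disjoint_of_nodup_append (by rw [h2]; exact hnd)
      apply hd
      rw [← htake]; simp
    have hcW : c ∉ letters (((mu ++ [x]) ++ γa.take i) ++ γa.drop (i+1)) := by
      rw [fk_letters_append]
      rintro (h | h)
      · exact hcnotv h
      · exact hcdropnot h
    have hsetW : letters (((mu ++ [x]) ++ γa.take i) ++ γa.drop (i+1)) ∪ {c}
        = letters (mu ++ γa) ∪ {x} := by
      conv_rhs => rw [show mu ++ γa = (mu ++ γa.take (i+1)) ++ γa.drop (i+1) by
        rw [List.append_assoc, List.take_append_drop]]
      rw [← htake]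
      ext q; simp [letters]; tauto
    have hxWmem : x ∈ letters (((mu ++ [x]) ++ γa.take i) ++ γa.drop (i+1)) := by
      simp [letters]
    have hswap : G.cont (((mu ++ [x]) ++ γa.take i) ++ γa.drop (i+1)) =
        G.cont (mu ++ γa) :=
      fk_swap hWrep hμγ hsetW hcT hcW hxWmem hxT hTdead
    have hfix : (mu ++ [x]) ++ (γa.take i ++ γa.drop (i+1)) =
        ((mu ++ [x]) ++ γa.take i) ++ γa.drop (i+1) := (List.append_assoc _ _ _).symm
    refine ⟨mu ++ [x], ⟨hx, rfl⟩, γa.take i ++ γa.drop (i+1), ?_, ?_, ?_⟩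
    · rw [hfix]; exact hWrep
    · rw [hfix]; exact hWrep
    · rw [hfix, hswap]; exact hcF

end PaperPG
end

section
/- Let Λ be a greedoid over a finite alphabet Σ. If there exists a polymatroid rank function ρ : 2^Σ → ℝ that represents Λ, then Λ possesses the interval property. -/
namespace PaperPG

lemma letters_nodup_ncard {A : Type*} [DecidableEq A] {w : List A} (h : w.Nodup) :
    (letters w).ncard = w.length := by
  have : letters w = ↑w.toFinset := by
    ext a; simp [letters]
  rw [this, Set.ncard_coe_finset, List.toFinset_card_of_nodup h]

lemma rho_of_mem {A : Type*} {G : Greedoid A} {ρ : Set A → ℝ}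
    (hpm : IsPolymatroid ρ) (hrep : Represents ρ G) {w : List A} (hw : w ∈ G.lang) :
    ρ (letters w) = w.length := by
  obtain ⟨hnd, hpre⟩ := (hrep w).1 hw
  rcases w.eq_nil_or_concat with rfl | ⟨l, a, rfl⟩
  · have : letters ([] : List A) = ∅ := by ext a; simp [letters]
    simp [this, hpm.1]
  · simp only [List.concat_eq_append] at hnd hpre ⊢
    have hlen : (l ++ [a]).length = l.length + 1 := by simp
    have h1 := hpre l.length (by simp)
    rw [show List.take (l.length + 1) (l ++ [a]) = l ++ [a] from by
      rw [← hlen, List.take_length]] at h1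
    rw [h1, hlen]; push_cast; ring

/-- A greedoid with a polymatroid representation has the interval property. -/
theorem representation_implies_interval {A : Type*} [Fintype A] (G : Greedoid A)
    (ρ : Set A → ℝ) (hpm : IsPolymatroid ρ) (hrep : Represents ρ G) :
    G.IntervalProperty := by
  classical
  intro X Y Z hX hY hZ hXY hYZ x hxZ hXx hZx
  obtain ⟨α, hα, hαX⟩ := hX
  obtain ⟨β, hβ, hβY⟩ := hY
  obtain ⟨γ, hγ, hγZ⟩ := hZ
  obtain ⟨δ, hδ, hδX⟩ := hXx
  obtain ⟨ε, hε, hεZ⟩ := hZx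
  have hxY : x ∉ Y := fun h => hxZ (hYZ h)
  have hxX : x ∉ X := fun h => hxY (hXY h)
  -- rank of feasible sets equals cardinality
  have rkα := rho_of_mem hpm hrep hα
  have rkβ := rho_of_mem hpm hrep hβ
  have rkγ := rho_of_mem hpm hrep hγ
  have rkδ := rho_of_mem hpm hrep hδ
  have rkε := rho_of_mem hpm hrep hε
  have cardα := letters_nodup_ncard (G.simple α hα)
  have cardβ := letters_nodup_ncard (G.simple β hβ)
  have cardγ := letters_nodup_ncard (G.simple γ hγ)
  have cardδ := letters_nodup_ncard (G.simple δ hδ)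
  have cardε := letters_nodup_ncard (G.simple ε hε)
  rw [hαX] at rkα cardα
  rw [hβY] at rkβ cardβ
  rw [hγZ] at rkγ cardγ
  rw [hδX] at rkδ cardδ
  rw [hεZ] at rkε cardε
  have hXfin : X.Finite := Set.toFinite _
  have hZfin : Z.Finite := Set.toFinite _
  have cardXx : (X ∪ {x}).ncard = X.ncard + 1 := by
    rw [Set.union_singleton, Set.ncard_insert_of_notMem hxX hXfin]
  have cardZx : (Z ∪ {x}).ncard = Z.ncard + 1 := by
    rw [Set.union_singleton, Set.ncard_insert_of_notMem hxZ hZfin]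
  have hρXx : ρ (X ∪ {x}) = ρ X + 1 := by
    rw [rkδ, rkα, ← cardδ, ← cardα, cardXx]; push_cast; ring
  have hρZx : ρ (Z ∪ {x}) = ρ Z + 1 := by
    rw [rkε, rkγ, ← cardε, ← cardγ, cardZx]; push_cast; ring
  -- submodularity bounds
  have sub1 := hpm.2.2 Y (X ∪ {x})
  have e1 : Y ∪ (X ∪ {x}) = Y ∪ {x} := by
    rw [← Set.union_assoc, Set.union_eq_self_of_subset_right hXY]
  have e2 : Y ∩ (X ∪ {x}) = X := by
    ext a
    simp only [Set.mem_inter_iff, Set.mem_union, Set.mem_singleton_iff]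
    constructor
    · rintro ⟨haY, haX | rfl⟩
      · exact haX
      · exact absurd haY hxY
    · intro h; exact ⟨hXY h, Or.inl h⟩
  rw [e1, e2, hρXx] at sub1
  have sub2 := hpm.2.2 (Y ∪ {x}) Z
  have e3 : (Y ∪ {x}) ∪ Z = Z ∪ {x} := by
    rw [Set.union_comm Y, Set.union_assoc, Set.union_eq_self_of_subset_left hYZ,
      Set.union_comm]
  have e4 : (Y ∪ {x}) ∩ Z = Y := by
    ext a
    simp only [Set.mem_inter_iff, Set.mem_union, Set.mem_singleton_iff]
    constructor
    · rintro ⟨haY | rfl, haZ⟩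
      · exact haY
      · exact absurd haZ hxZ
    · intro h; exact ⟨Or.inl h, hYZ h⟩
  rw [e3, e4, hρZx] at sub2
  have hρYx : ρ (Y ∪ {x}) = ρ Y + 1 := le_antisymm (by linarith) (by linarith)
  -- β ++ [x] is feasible
  refine ⟨β ++ [x], ?_, ?_⟩
  · obtain ⟨hnd, hpre⟩ := (hrep β).1 hβ
    refine (hrep (β ++ [x])).2 ⟨?_, ?_⟩
    · rw [List.nodup_append]
      refine ⟨hnd, List.nodup_singleton x, ?_⟩
      intro a ha b hb
      simp only [List.mem_singleton] at hb
      subst hb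
      rintro rfl
      exact hxY (hβY ▸ ha)
    · intro i hi
      simp only [List.length_append, List.length_singleton] at hi
      rcases Nat.lt_or_ge (i + 1) (β.length + 1) with h | h
      · have h' : i + 1 ≤ β.length := Nat.lt_succ_iff.mp h
        rw [List.take_append_of_le_length h']
        exact hpre i (Nat.lt_of_lt_of_le (Nat.lt_succ_iff.mpr le_rfl) h')
      · have hieq : i = β.length := le_antisymm (Nat.lt_succ_iff.mp hi)
          (Nat.succ_le_succ_iff.mp h)
        subst hieq
        rw [show (β ++ [x]).take (β.length + 1) = β ++ [x] by
          rw [show β.length + 1 = (β ++ [x]).length by simp, List.take_length]]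
        have : letters (β ++ [x]) = Y ∪ {x} := by
          rw [← hβY]; ext a; simp only [letters, Set.mem_setOf_eq, List.mem_append,
            List.mem_singleton, Set.mem_union, Set.mem_singleton_iff]
        rw [this, hρYx, rkβ]
  · rw [← hβY]; ext a; simp only [letters, Set.mem_setOf_eq, List.mem_append,
      List.mem_singleton, Set.mem_union, Set.mem_singleton_iff]

end PaperPG
end

section
/- Let Λ be a normal greedoid over a finite alphabet Σ and let ρ be a polymatroid rank function that represents Λ. If ρ is integral (all its values are integers), then ρ is an aligned representation of Λ. -/
namespace PaperPG

section AlignedProof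

variable {A : Type*}

lemma letters_append (a b : List A) : letters (a ++ b) = letters a ∪ letters b := by
  ext x; simp [letters]

lemma letters_concat (a : List A) (x : A) : letters (a ++ [x]) = letters a ∪ {x} := by
  ext y; simp [letters, or_comm]

lemma mem_span_iff {ρ : Set A → ℝ} {X : Set A} {y : A} :
    y ∈ spanP ρ X ↔ ρ (X ∪ {y}) = ρ X := Iff.rfl

lemma subset_span (ρ : Set A → ℝ) (X : Set A) : X ⊆ spanP ρ X := by
  intro y hy
  have h : X ∪ {y} = X := by
    apply Set.union_eq_self_of_subset_right; simp [hy]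
  simp [mem_span_iff, h]

lemma pm_marginal {ρ : Set A → ℝ} (hpm : IsPolymatroid ρ) {X Y : Set A} (h : X ⊆ Y) (y : A) :
    ρ (Y ∪ {y}) ≤ ρ (X ∪ {y}) + ρ Y - ρ X := by
  have hs := hpm.2.2 (X ∪ {y}) Y
  have h1 : (X ∪ {y}) ∪ Y = Y ∪ {y} := by
    ext z; have hz := @h z
    simp only [Set.mem_union, Set.mem_singleton_iff]
    tauto
  have h2 : ρ X ≤ ρ ((X ∪ {y}) ∩ Y) :=
    hpm.2.1 _ _ (Set.subset_inter Set.subset_union_left h)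
  rw [h1] at hs; linarith

lemma span_mono {ρ : Set A → ℝ} (hpm : IsPolymatroid ρ) {X Y : Set A} (h : X ⊆ Y) :
    spanP ρ X ⊆ spanP ρ Y := by
  intro y hy
  rw [mem_span_iff] at hy ⊢
  have h1 := pm_marginal hpm h y
  have h2 := hpm.2.1 Y (Y ∪ {y}) Set.subset_union_left
  linarith

lemma rho_union_finset {ρ : Set A → ℝ} (hpm : IsPolymatroid ρ) (S : Finset A) :
    ∀ X : Set A, ↑S ⊆ spanP ρ X → ρ (X ∪ ↑S) = ρ X := by
  classical
  induction S using Finset.induction_on with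
  | empty => intro X _; simp
  | @insert a s ha IH =>
    intro X hS
    have haX : ρ (X ∪ {a}) = ρ X := hS (by simp)
    have hsX : (↑s : Set A) ⊆ spanP ρ X := by
      refine Set.Subset.trans ?_ hS
      rw [Finset.coe_insert]; exact Set.subset_insert a ↑s
    have e : X ∪ ↑(insert a s) = (X ∪ ↑s) ∪ {a} := by
      ext z
      simp only [Finset.coe_insert, Set.mem_union, Set.mem_insert_iff, Set.mem_singleton_iff]
      tauto
    rw [e]
    have h1 := pm_marginal hpm (show X ⊆ X ∪ ↑s from Set.subset_union_left) a
    have h3 : ρ (X ∪ ↑s) = ρ X := IH X hsX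
    have h4 : ρ (X ∪ ↑s) ≤ ρ ((X ∪ ↑s) ∪ {a}) := hpm.2.1 _ _ Set.subset_union_left
    linarith

lemma rho_span [Fintype A] {ρ : Set A → ℝ} (hpm : IsPolymatroid ρ) (X : Set A) :
    ρ (spanP ρ X) = ρ X := by
  have h := rho_union_finset hpm (Set.toFinite (spanP ρ X)).toFinset X
    (by rw [Set.Finite.coe_toFinset])
  rwa [Set.Finite.coe_toFinset,
    Set.union_eq_self_of_subset_left (subset_span ρ X)] at h

lemma span_closed [Fintype A] {ρ : Set A → ℝ} (hpm : IsPolymatroid ρ) (X : Set A) :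
    ClosedP ρ (spanP ρ X) := by
  apply subset_antisymm
  · intro y hy
    rw [mem_span_iff] at hy ⊢
    have h1 : ρ (X ∪ {y}) ≤ ρ (spanP ρ X ∪ {y}) :=
      hpm.2.1 _ _ (Set.union_subset_union_left _ (subset_span ρ X))
    have h2 : ρ X ≤ ρ (X ∪ {y}) := hpm.2.1 _ _ Set.subset_union_left
    rw [hy, rho_span hpm X] at h1
    linarith
  · exact subset_span ρ _

lemma span_between [Fintype A] {ρ : Set A → ℝ} (hpm : IsPolymatroid ρ) {X Y : Set A}
    (h1 : X ⊆ Y) (h2 : Y ⊆ spanP ρ X) : spanP ρ Y = spanP ρ X := by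
  refine subset_antisymm ?_ (span_mono hpm h1)
  have h3 := span_mono hpm h2
  rwa [show spanP ρ (spanP ρ X) = spanP ρ X from span_closed hpm X] at h3

lemma take_mem {G : Greedoid A} {α : List A} (hα : α ∈ G.lang) (n : ℕ) :
    α.take n ∈ G.lang :=
  G.hereditary _ (α.drop n) (by rw [List.take_append_drop]; exact hα)

lemma rho_letters {ρ : Set A → ℝ} {G : Greedoid A} (hpm : IsPolymatroid ρ)
    (hrep : Represents ρ G) {α : List A} (hα : α ∈ G.lang) :
    ρ (letters α) = α.length := by
  rcases eq_or_ne α [] with rfl | hne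
  · have h : letters ([] : List A) = (∅ : Set A) := by ext z; simp [letters]
    simp [h, hpm.1]
  · have hl : 0 < α.length := List.length_pos_iff.mpr hne
    have h := ((hrep α).mp hα).2 (α.length - 1) (by omega)
    rw [show α.length - 1 + 1 = α.length by omega, List.take_length] at h
    rw [h]
    have h2 : α.length - 1 + 1 = α.length := by omega
    exact_mod_cast h2

lemma concat_mem {ρ : Set A → ℝ} {G : Greedoid A} (hrep : Represents ρ G) {α : List A} {x : A}
    (hα : α ∈ G.lang) (hx : x ∉ letters α)
    (hρ : ρ (letters α ∪ {x}) = α.length + 1) : α ++ [x] ∈ G.lang := by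
  rw [hrep]
  refine ⟨?_, ?_⟩
  · have hnd := G.simple α hα
    refine List.Nodup.append hnd (List.nodup_singleton x) ?_
    intro a haα hax
    rw [List.mem_singleton] at hax
    subst hax
    exact hx haα
  · intro i hi
    rw [List.length_append, List.length_singleton] at hi
    by_cases h : i < α.length
    · rw [List.take_append_of_le_length (by omega)]
      exact ((hrep α).mp hα).2 i h
    · have hi' : i = α.length := by omega
      subst hi'
      rw [show α.length + 1 = (α ++ [x]).length by simp, List.take_length, letters_concat]
      exact hρ

lemma concat_inv {ρ : Set A → ℝ} {G : Greedoid A} (hrep : Represents ρ G) {α : List A} {x : A}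
    (h : α ++ [x] ∈ G.lang) :
    α ∈ G.lang ∧ x ∉ letters α ∧ ρ (letters α ∪ {x}) = α.length + 1 := by
  refine ⟨G.hereditary α [x] h, ?_, ?_⟩
  · have hnd := G.simple _ h
    rw [List.nodup_append] at hnd
    intro hxα
    exact hnd.2.2 x hxα x (by simp) rfl
  · have h2 := ((hrep _).mp h).2 α.length (by simp)
    rwa [show α.length + 1 = (α ++ [x]).length by simp, List.take_length,
      letters_concat] at h2

lemma mem_flatOf_self {G : Greedoid A} {α : List A} (hα : α ∈ G.lang) :
    α ∈ G.flatOf α := ⟨hα, rfl⟩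

lemma flatOf_eq_of_mem {G : Greedoid A} {α β : List A} (h : β ∈ G.flatOf α) :
    G.flatOf β = G.flatOf α := by
  ext γ
  constructor
  · rintro ⟨h1, h2⟩; exact ⟨h1, by rw [h2, h.2]⟩
  · rintro ⟨h1, h2⟩; exact ⟨h1, by rw [h2, ← h.2]⟩

lemma central [Fintype A] {ρ : Set A → ℝ} {G : Greedoid A} (hpm : IsPolymatroid ρ)
    (hrep : Represents ρ G) (hint : ∀ X : Set A, ∃ n : ℤ, ρ X = (n : ℝ))
    {α β : List A} (hα : α ∈ G.lang) (hβ : β ∈ G.lang) (hc : G.cont β = G.cont α) :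
    letters β ⊆ spanP ρ (letters α) := by
  have hk : ρ (letters α) = α.length := rho_letters hpm hrep hα
  have key : ∀ i, letters (β.take i) ⊆ spanP ρ (letters α) := by
    intro i
    induction i with
    | zero =>
      intro z hz; simp [letters] at hz
    | succ i IH =>
      by_cases hlen : β.length ≤ i
      · rw [List.take_of_length_le (by omega)]
        rw [List.take_of_length_le hlen] at IH
        exact IH
      · push_neg at hlen
        have htake : β.take (i + 1) = β.take i ++ [β.get ⟨i, hlen⟩] := by
          simpa [List.concat_eq_append] using (List.take_concat_get β i hlen).symm
        rw [htake, letters_concat]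
        set y := β.get ⟨i, hlen⟩ with hy
        refine Set.union_subset IH ?_
        rw [Set.singleton_subset_iff]
        -- facts about prefixes of β
        have hβi : β.take i ∈ G.lang := take_mem hβ i
        have hβi1 : β.take (i + 1) ∈ G.lang := take_mem hβ (i + 1)
        have hρβi : ρ (letters (β.take i)) = (i : ℝ) := by
          rw [rho_letters hpm hrep hβi]
          have : (β.take i).length = i := by simp [List.length_take]; omega
          rw [this]
        have hρβi1 : ρ (letters (β.take i) ∪ {y}) = (i : ℝ) + 1 := by
          have h := rho_letters hpm hrep hβi1
          rw [htake, letters_concat] at h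
          rw [h]
          have : (β.take (i+1)).length = i + 1 := by simp [List.length_take]; omega
          rw [htake] at this
          rw [this]; push_cast; ring
        set X := letters α ∪ letters (β.take i) with hX
        have hXsub : X ⊆ spanP ρ (letters α) :=
          Set.union_subset (subset_span ρ (letters α)) IH
        have hρX : ρ X = (α.length : ℝ) := by
          refine le_antisymm ?_ ?_
          · have := hpm.2.1 X _ hXsub
            rwa [rho_span hpm, hk] at this
          · have := hpm.2.1 (letters α) X Set.subset_union_left
            rwa [hk] at this
        have hmarg := pm_marginal hpm (show letters (β.take i) ⊆ X from Set.subset_union_right) y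
        have hXy_le : ρ (X ∪ {y}) ≤ (α.length : ℝ) + 1 := by
          rw [hρβi1, hρβi, hρX] at hmarg; linarith
        have h1 : ρ (letters α) ≤ ρ (letters α ∪ {y}) := hpm.2.1 _ _ Set.subset_union_left
        have h2 : ρ (letters α ∪ {y}) ≤ ρ (X ∪ {y}) :=
          hpm.2.1 _ _ (Set.union_subset_union_left _ Set.subset_union_left)
        by_cases hcase : ρ (letters α ∪ {y}) = ρ (letters α)
        · exact hcase
        · exfalso
          -- then ρ (letters α ∪ {y}) = α.length + 1 by integrality
          obtain ⟨n, hn⟩ := hint (letters α ∪ {y})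
          have hn1 : (α.length : ℝ) ≤ (n : ℝ) := by rw [← hn]; linarith [hk ▸ h1]
          have hn2 : (n : ℝ) ≤ (α.length : ℝ) + 1 := by rw [← hn]; linarith
          have hn3 : (n : ℝ) ≠ (α.length : ℝ) := by
            rw [← hn]; intro hcon; exact hcase (by rw [hcon, hk])
          have hn1' : (α.length : ℤ) ≤ n := by exact_mod_cast hn1
          have hn2' : n ≤ (α.length : ℤ) + 1 := by exact_mod_cast hn2
          have hn3' : n ≠ (α.length : ℤ) := by exact_mod_cast hn3
          have hneq : n = (α.length : ℤ) + 1 := by omega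
          have hval : ρ (letters α ∪ {y}) = (α.length : ℝ) + 1 := by
            rw [hn, hneq]; push_cast; ring
          -- y ∉ letters α
          have hyα : y ∉ letters α := by
            intro hmem
            have : letters α ∪ {y} = letters α := by
              apply Set.union_eq_self_of_subset_right; simp [hmem]
            rw [this, hk] at hval
            linarith
          -- α ++ [y] ∈ lang, so y ∈ cont α = cont β, contradiction with y ∈ β
          have hαy : α ++ [y] ∈ G.lang := concat_mem hrep hα hyα hval
          have hyc : y ∈ G.cont α := hαy
          rw [← hc] at hyc
          have hnd := G.simple _ hyc
          rw [List.nodup_append] at hnd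
          have hyβ : y ∈ β := by rw [hy]; exact List.get_mem β ⟨i, hlen⟩
          exact hnd.2.2 y hyβ y (List.mem_singleton_self y) rfl
  intro y hy
  have h := key β.length
  rw [List.take_length] at h
  exact h hy

lemma span_kernel [Fintype A] {ρ : Set A → ℝ} {G : Greedoid A} (hpm : IsPolymatroid ρ)
    (hrep : Represents ρ G) (hint : ∀ X : Set A, ∃ n : ℤ, ρ X = (n : ℝ))
    {α : List A} (hα : α ∈ G.lang) :
    spanP ρ (flatKernel (G.flatOf α)) = spanP ρ (letters α) := by
  apply span_between hpm
  · intro y hy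
    exact ⟨α, mem_flatOf_self hα, hy⟩
  · rintro y ⟨β, hβ, hyβ⟩
    exact central hpm hrep hint hα hβ.1 hβ.2 hyβ

end AlignedProof

/-- Every integral polymatroid representation of a normal greedoid is aligned. -/
theorem integral_implies_aligned {A : Type*} [Fintype A] (G : Greedoid A)
    (hnorm : G.Normal) (ρ : Set A → ℝ)
    (hpm : IsPolymatroid ρ) (hrep : Represents ρ G)
    (hint : ∀ X : Set A, ∃ n : ℤ, ρ X = (n : ℝ)) :
    Aligned G ρ := by
  classical
  refine ⟨fun F => spanP ρ (flatKernel F), ?_, ?_, ?_, ?_, ?_⟩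
  · beta_reduce
    rintro F ⟨α, hα, rfl⟩
    rw [span_kernel hpm hrep hint hα]
    exact span_closed hpm _
  · beta_reduce
    rintro F F' hF hF' ⟨α, hαF, γ, hαγ, hγF'⟩
    obtain ⟨α₀, hα₀, rfl⟩ := hF
    obtain ⟨α₁, hα₁, rfl⟩ := hF'
    have hFα : G.flatOf α₀ = G.flatOf α := (flatOf_eq_of_mem hαF).symm
    have hF'αγ : G.flatOf α₁ = G.flatOf (α ++ γ) := (flatOf_eq_of_mem hγF').symm
    rw [hFα, hF'αγ, span_kernel hpm hrep hint hαF.1, span_kernel hpm hrep hint hαγ]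
    apply span_mono hpm
    rw [letters_append]
    exact Set.subset_union_left
  · beta_reduce
    intro α hα
    rw [span_kernel hpm hrep hint hα, rho_span hpm]
  · beta_reduce
    intro α hα
    rw [span_kernel hpm hrep hint hα]
    exact subset_span ρ _
  · beta_reduce
    rintro F F' hF hF' hcov
    obtain ⟨α₀, hα₀, rfl⟩ := hF
    obtain ⟨α₁, hα₁, rfl⟩ := hF'
    obtain ⟨⟨⟨α, hαF, γ, hαγ, hγF'⟩, hne⟩, hmax⟩ := hcov
    have hαl : α ∈ G.lang := hαF.1
    have hFα : G.flatOf α₀ = G.flatOf α := (flatOf_eq_of_mem hαF).symm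
    have hF'αγ : G.flatOf α₁ = G.flatOf (α ++ γ) := (flatOf_eq_of_mem hγF').symm
    have hγnil : γ ≠ [] := by
      rintro rfl
      apply hne
      rw [hFα, hF'αγ, List.append_nil]
    have hγpos : 0 < γ.length := List.length_pos_iff.mpr hγnil
    set P : ℕ → Prop := fun i => G.flatOf (α ++ γ.take i) = G.flatOf α₁ with hP
    have hPlen : P γ.length := by
      show G.flatOf (α ++ γ.take γ.length) = G.flatOf α₁
      rw [List.take_length]
      exact hF'αγ.symm
    have hex : ∃ i, P i := ⟨γ.length, hPlen⟩
    have hP0 : ¬ P 0 := by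
      show ¬ G.flatOf (α ++ γ.take 0) = G.flatOf α₁
      rw [List.take_zero, List.append_nil, ← hFα]
      exact hne
    set i₀ := Nat.find hex with hi₀def
    have hPi₀ : P i₀ := Nat.find_spec hex
    have hi₀le : i₀ ≤ γ.length := Nat.find_le hPlen
    have hi₀pos : 0 < i₀ := by
      rcases Nat.eq_zero_or_pos i₀ with h | h
      · exact absurd (h ▸ hPi₀) hP0
      · exact h
    set j := i₀ - 1 with hjdef
    have hjlt : j < γ.length := by omega
    have hjP : ¬ P j := Nat.find_min hex (by omega)
    set δ := α ++ γ.take j with hδdef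
    have hδ : δ ∈ G.lang := by
      apply G.hereditary δ (γ.drop j)
      rw [hδdef, List.append_assoc, List.take_append_drop]
      exact hαγ
    have hEδ : G.flatOf δ = G.flatOf α₀ := by
      by_contra hEF
      refine hmax (G.flatOf δ) ⟨δ, hδ, rfl⟩
        ⟨⟨α, hαF, γ.take j, hδ, mem_flatOf_self hδ⟩, fun h => hEF h.symm⟩
        ⟨⟨δ, mem_flatOf_self hδ, γ.drop j, ?_, ?_⟩, hjP⟩
      · rw [hδdef, List.append_assoc, List.take_append_drop]
        exact hαγ
      · have e : δ ++ γ.drop j = α ++ γ := by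
          rw [hδdef, List.append_assoc, List.take_append_drop]
        rw [e]
        exact hγF'
    set x := γ.get ⟨j, hjlt⟩ with hxdef
    have htake : γ.take i₀ = γ.take j ++ [x] := by
      have hj1 : j + 1 = i₀ := by omega
      have h := List.take_concat_get hjlt
      rw [List.concat_eq_append] at h
      rw [← hj1, ← h, hxdef, List.get_eq_getElem]
    have hδxeq : δ ++ [x] = α ++ γ.take i₀ := by
      rw [hδdef, List.append_assoc, ← htake]
    have hδx : δ ++ [x] ∈ G.lang := by
      apply G.hereditary _ (γ.drop i₀)
      have e : (δ ++ [x]) ++ γ.drop i₀ = α ++ γ := by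
        rw [hδxeq, List.append_assoc, List.take_append_drop]
      rw [e]
      exact hαγ
    have hflatδx : G.flatOf (δ ++ [x]) = G.flatOf α₁ := by
      rw [hδxeq]
      exact hPi₀
    obtain ⟨hδl, hxδ, hρδx⟩ := concat_inv hrep hδx
    have hρδ : ρ (letters δ) = (δ.length : ℝ) := rho_letters hpm hrep hδ
    have hφF : spanP ρ (flatKernel (G.flatOf α₀)) = spanP ρ (letters δ) := by
      rw [← hEδ, span_kernel hpm hrep hint hδ]
    have hφF' : spanP ρ (flatKernel (G.flatOf α₁)) = spanP ρ (letters δ ∪ {x}) := by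
      rw [← hflatδx, span_kernel hpm hrep hint hδx, letters_concat]
    rw [hφF, hφF']
    set X := letters δ with hXdef
    set k := (δ.length : ℝ) with hkdef
    refine ⟨span_closed hpm _, span_closed hpm _,
      HasSubset.Subset.ssubset_of_ne (span_mono hpm Set.subset_union_left) ?_, ?_⟩
    · intro h
      have h' := congrArg ρ h
      rw [rho_span hpm, rho_span hpm, hρδ, hρδx] at h'
      linarith
    · intro T hT h1 h2
      obtain ⟨y, hyT, hyn⟩ := Set.exists_of_ssubset h1
      have hTsub : T ⊆ spanP ρ (X ∪ {x}) := h2.subset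
      have hyx : ρ ((X ∪ {x}) ∪ {y}) = ρ (X ∪ {x}) := mem_span_iff.mp (hTsub hyT)
      have hle : ρ (X ∪ {y}) ≤ k + 1 := by
        have hm := hpm.2.1 (X ∪ {y}) ((X ∪ {x}) ∪ {y})
          (Set.union_subset_union_left _ Set.subset_union_left)
        rw [hyx, hρδx] at hm
        exact hm
      have hge : ρ X ≤ ρ (X ∪ {y}) := hpm.2.1 _ _ Set.subset_union_left
      have hneq : ρ (X ∪ {y}) ≠ ρ X := fun h => hyn (mem_span_iff.mpr h)
      obtain ⟨n, hn⟩ := hint (X ∪ {y})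
      have hval : ρ (X ∪ {y}) = k + 1 := by
        have e1 : (δ.length : ℝ) ≤ (n : ℝ) := by rw [← hn]; rw [hρδ] at hge; exact hge
        have e2 : (n : ℝ) ≤ (δ.length : ℝ) + 1 := by rw [← hn]; exact hle
        have e3 : (n : ℝ) ≠ (δ.length : ℝ) := by
          rw [← hn]
          intro hcon
          exact hneq (by rw [hcon, hρδ])
        have e1' : (δ.length : ℤ) ≤ n := by exact_mod_cast e1
        have e2' : n ≤ (δ.length : ℤ) + 1 := by exact_mod_cast e2
        have e3' : n ≠ (δ.length : ℤ) := by exact_mod_cast e3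
        have : n = (δ.length : ℤ) + 1 := by omega
        rw [hn, this]
        push_cast
        rw [hkdef]
      have hxy : ρ ((X ∪ {y}) ∪ {x}) = ρ (X ∪ {y}) := by
        have e : (X ∪ {y}) ∪ {x} = (X ∪ {x}) ∪ {y} := by
          ext z
          simp only [Set.mem_union, Set.mem_singleton_iff]
          tauto
        rw [e, hyx, hρδx, hval]
      have hXyT : X ∪ {y} ⊆ T :=
        Set.union_subset ((subset_span ρ X).trans h1.subset) (by simp [hyT])
      have hxT : x ∈ T := by
        have hs := span_mono hpm hXyT
        rw [show spanP ρ T = T from hT] at hs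
        exact hs (mem_span_iff.mpr hxy)
      have hXxT : X ∪ {x} ⊆ T :=
        Set.union_subset ((subset_span ρ X).trans h1.subset) (by simp [hxT])
      have hfin : spanP ρ (X ∪ {x}) ⊆ T := by
        have hs := span_mono hpm hXxT
        rwa [show spanP ρ T = T from hT] at hs
      exact h2.not_subset hfin

end PaperPG
end
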